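/- Young-type inequality in Morrey spaces: for $1 \le p \le \infty$ and $0 \le \mu < n$, if $\varphi \in L^1(\mathbb{R}^n)$ and $g \in M_{p,\mu}(\mathbb{R}^n)$, then the convolution satisfies $\|\varphi * g\|_{M_{p,\mu}} \le \|\varphi\|_{L^1} \|g\|_{M_{p,\mu}}$. -/

import Mathlib

/-!
Write `φ ⋆ g = ∫ φ(t) g(· - t) dt`. Absorbing `|φ|` into the measure `ν = |φ| dt`, whose total
mass is `‖φ‖₁`, Minkowski's integral inequality gives, on every ball,
`‖φ ⋆ g‖_{L^p(B_R(x₀))} ≤ ν(ℝⁿ) · sup_t ‖g(· - t)‖_{L^p(B_R(x₀))}`, and translating the ball,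
`‖g(· - t)‖_{L^p(B_R(x₀))} = ‖g‖_{L^p(B_R(x₀ - t))} ≤ R^{μ/p} ‖g‖_{M_{p,μ}}`.
For `p < ∞` Minkowski's inequality follows from Jensen's inequality for `ν` and Tonelli; for
`p = ∞` from exchanging the two "almost everywhere" quantifiers.
-/

open MeasureTheory ENNReal

noncomputable def morreyNorm (n : ℕ) (p : ℝ≥0∞) (μ : ℝ)
    {E : Type*} [NormedAddCommGroup E] (f : EuclideanSpace ℝ (Fin n) → E) : ℝ≥0∞ :=
  ⨆ (x₀ : EuclideanSpace ℝ (Fin n)) (R : ℝ) (_ : 0 < R),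
    ENNReal.ofReal (R ^ (-(μ / p.toReal))) *
      eLpNorm f p (volume.restrict (Metric.ball x₀ R))

open scoped Convolution

theorem rpow_lintegral_le_mul_lintegral_rpow {α : Type*} [MeasurableSpace α] {μ : Measure α}
    {f : α → ℝ≥0∞} (hf : AEMeasurable f μ) {r : ℝ} (hr : 1 ≤ r) :
    (∫⁻ x, f x ∂μ) ^ r ≤ μ Set.univ ^ (r - 1) * ∫⁻ x, f x ^ r ∂μ := by
  have hr0 : 0 < r := zero_lt_one.trans_le hr
  have h := eLpNorm_le_eLpNorm_mul_rpow_measure_univ (p := 1) (q := ENNReal.ofReal r)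
    (by simpa using hr) hf.aestronglyMeasurable
  rw [eLpNorm_one_eq_lintegral_enorm,
    eLpNorm_eq_lintegral_rpow_enorm_toReal (by simp; linarith) (by simp),
    ENNReal.toReal_ofReal hr0.le] at h
  simp only [enorm_eq_self, toReal_one, div_one] at h
  calc (∫⁻ x, f x ∂μ) ^ r
      ≤ ((∫⁻ x, f x ^ r ∂μ) ^ (1 / r) * μ Set.univ ^ (1 - 1 / r)) ^ r := by gcongr
    _ = μ Set.univ ^ (r - 1) * ∫⁻ x, f x ^ r ∂μ := by
      rw [ENNReal.mul_rpow_of_nonneg _ _ hr0.le, ← ENNReal.rpow_mul, ← ENNReal.rpow_mul,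
        one_div_mul_cancel hr0.ne', ENNReal.rpow_one, mul_comm]
      congr 2
      field_simp

theorem eLpNorm_lintegral_le {α β : Type*} [MeasurableSpace α] [MeasurableSpace β]
    {ρ : Measure α} {ν : Measure β} [SFinite ρ] [SFinite ν] {p : ℝ≥0∞} (hp : 1 ≤ p)
    {F : α → β → ℝ≥0∞} (hF : Measurable (Function.uncurry F)) {K : ℝ≥0∞}
    (hK : ∀ t, eLpNorm (F · t) p ρ ≤ K) :
    eLpNorm (fun x ↦ ∫⁻ t, F x t ∂ν) p ρ ≤ ν Set.univ * K := by
  obtain rfl | hp_top := eq_or_ne p ∞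
  · have hFK : ∀ᵐ x ∂ρ, ∀ᵐ t ∂ν, F x t ≤ K := by
      refine (Measure.ae_ae_comm (p := fun x t ↦ F x t ≤ K)
        (measurableSet_le hF measurable_const)).2 (ae_of_all _ fun t ↦ ?_)
      simpa using (ae_le_eLpNormEssSup (f := (F · t))).mono fun x hx ↦ hx.trans (hK t)
    refine eLpNormEssSup_le_of_ae_enorm_bound (hFK.mono fun x hx ↦ ?_)
    calc ∫⁻ t, F x t ∂ν ≤ ∫⁻ _, K ∂ν := lintegral_mono_ae hx
      _ = ν Set.univ * K := by rw [lintegral_const, mul_comm]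
  have hp0 : p ≠ 0 := (zero_lt_one.trans_le hp).ne'
  have hr : 1 ≤ p.toReal := by simpa using ENNReal.toReal_mono hp_top hp
  have hr0 : 0 < p.toReal := zero_lt_one.trans_le hr
  have h_rpow (h : α → ℝ≥0∞) : eLpNorm h p ρ ^ p.toReal = ∫⁻ x, h x ^ p.toReal ∂ρ := by
    rw [eLpNorm_eq_eLpNorm' hp0 hp_top, ← lintegral_rpow_enorm_eq_rpow_eLpNorm' hr0]
    simp only [enorm_eq_self]
  rw [← ENNReal.rpow_le_rpow_iff hr0, h_rpow]
  calc ∫⁻ x, (∫⁻ t, F x t ∂ν) ^ p.toReal ∂ρ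
      ≤ ∫⁻ x, ν Set.univ ^ (p.toReal - 1) * ∫⁻ t, F x t ^ p.toReal ∂ν ∂ρ :=
        lintegral_mono fun x ↦
          rpow_lintegral_le_mul_lintegral_rpow (hF.comp measurable_prodMk_left).aemeasurable hr
    _ = ν Set.univ ^ (p.toReal - 1) * ∫⁻ t, ∫⁻ x, F x t ^ p.toReal ∂ρ ∂ν := by
        rw [lintegral_const_mul (f := fun x ↦ ∫⁻ t, F x t ^ p.toReal ∂ν) _
            (hF.pow_const _).lintegral_prod_right',
          lintegral_lintegral_swap (hF.pow_const _).aemeasurable]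
    _ ≤ ν Set.univ ^ (p.toReal - 1) * ∫⁻ _, K ^ p.toReal ∂ν := by
        gcongr with t
        rw [← h_rpow]
        exact ENNReal.rpow_le_rpow (hK t) hr0.le
    _ = ν Set.univ ^ (p.toReal - 1) * ν Set.univ ^ (1 : ℝ) * K ^ p.toReal := by
        rw [lintegral_const, ENNReal.rpow_one]; ring
    _ = (ν Set.univ * K) ^ p.toReal := by
        rw [← ENNReal.rpow_add_of_nonneg _ _ (by linarith) zero_le_one, sub_add_cancel,
          ENNReal.mul_rpow_of_nonneg _ _ hr0.le]

section Convolution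

variable {𝕜 G E E' F : Type*} [NontriviallyNormedField 𝕜]
  [NormedAddCommGroup E] [NormedAddCommGroup E'] [NormedAddCommGroup F]
  [NormedSpace 𝕜 E] [NormedSpace 𝕜 E'] [NormedSpace 𝕜 F] [NormedSpace ℝ F]
  [MeasurableSpace G] [Sub G] {L : E →L[𝕜] E' →L[𝕜] F} {f : G → E} {g : G → E'}

theorem enorm_convolution_le_lintegral (hL : ‖L‖ ≤ 1) (μ : Measure G) (x : G) :
    ‖(f ⋆[L, μ] g) x‖ₑ ≤ ∫⁻ t, ‖f t‖ₑ * ‖g (x - t)‖ₑ ∂μ := by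
  refine (enorm_integral_le_lintegral_enorm _).trans (lintegral_mono fun t ↦ ?_)
  have h : ‖L (f t) (g (x - t))‖ ≤ ‖f t‖ * ‖g (x - t)‖ :=
    calc _ ≤ ‖L‖ * ‖f t‖ * ‖g (x - t)‖ := L.le_opNorm₂ _ _
      _ ≤ 1 * ‖f t‖ * ‖g (x - t)‖ := by gcongr
      _ = _ := by rw [one_mul]
  simpa only [ofReal_norm, ENNReal.ofReal_mul (norm_nonneg _)]
    using ENNReal.ofReal_le_ofReal h

theorem eLpNorm_convolution_le [MeasurableSub₂ G] (hL : ‖L‖ ≤ 1) {μ ρ : Measure G}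
    [SFinite μ] [SFinite ρ] {p : ℝ≥0∞} (hp : 1 ≤ p) (hf : StronglyMeasurable f)
    (hg : StronglyMeasurable g) {K : ℝ≥0∞} (hK : ∀ t, eLpNorm (fun x ↦ g (x - t)) p ρ ≤ K) :
    eLpNorm (f ⋆[L, μ] g) p ρ ≤ eLpNorm f 1 μ * K := by
  have hF : Measurable (Function.uncurry fun x t ↦ ‖g (x - t)‖ₑ) :=
    (hg.comp_measurable measurable_sub).enorm
  calc eLpNorm (f ⋆[L, μ] g) p ρ
      ≤ eLpNorm (fun x ↦ ∫⁻ t, ‖g (x - t)‖ₑ ∂μ.withDensity (‖f ·‖ₑ)) p ρ := by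
        refine eLpNorm_mono_enorm fun x ↦ ?_
        rw [enorm_eq_self, lintegral_withDensity_eq_lintegral_mul _ hf.enorm
          (g := fun t ↦ ‖g (x - t)‖ₑ) (hF.comp measurable_prodMk_left)]
        exact enorm_convolution_le_lintegral hL μ x
    _ ≤ μ.withDensity (‖f ·‖ₑ) Set.univ * K :=
        eLpNorm_lintegral_le hp hF fun t ↦ by simpa only [eLpNorm_enorm] using hK t
    _ = eLpNorm f 1 μ * K := by
        rw [withDensity_apply _ MeasurableSet.univ, Measure.restrict_univ,
          eLpNorm_one_eq_lintegral_enorm]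

end Convolution

theorem eLpNorm_comp_sub_right_restrict_ball {G E : Type*} [NormedAddCommGroup G]
    [MeasurableSpace G] [BorelSpace G] [NormedAddCommGroup E] (μ : Measure G)
    [μ.IsAddRightInvariant] (g : G → E) (p : ℝ≥0∞) (x₀ t : G) (R : ℝ) :
    eLpNorm (fun x ↦ g (x - t)) p (μ.restrict (Metric.ball x₀ R)) =
      eLpNorm g p (μ.restrict (Metric.ball (x₀ - t) R)) := by
  have hball : (· - t) ⁻¹' Metric.ball (x₀ - t) R = Metric.ball x₀ R := by
    ext x; simp
  have hmp := (measurePreserving_sub_right μ t).restrict_preimage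
    (s := Metric.ball (x₀ - t) R) measurableSet_ball
  rw [hball] at hmp
  rw [← hmp.map_eq, (measurableEmbedding_subRight t).eLpNorm_map_measure]
  rfl

section Morrey

variable {n : ℕ} {p : ℝ≥0∞} {μ : ℝ} {E : Type*} [NormedAddCommGroup E]

theorem morreyNorm_le_iff {f : EuclideanSpace ℝ (Fin n) → E} {C : ℝ≥0∞} :
    morreyNorm n p μ f ≤ C ↔ ∀ x₀ (R : ℝ), 0 < R →
      eLpNorm f p (volume.restrict (Metric.ball x₀ R)) ≤
        ENNReal.ofReal (R ^ (μ / p.toReal)) * C := by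
  simp only [morreyNorm, iSup_le_iff]
  refine forall_congr' fun x₀ ↦ forall_congr' fun R ↦ forall_congr' fun hR ↦ ?_
  have hw : 0 < R ^ (-(μ / p.toReal)) := Real.rpow_pos_of_pos hR _
  rw [ENNReal.mul_le_iff_le_inv (ENNReal.ofReal_pos.2 hw).ne' ofReal_ne_top,
    ← ENNReal.ofReal_inv_of_pos hw, ← Real.rpow_neg hR.le, neg_neg]

theorem morreyNorm_congr_ae {f g : EuclideanSpace ℝ (Fin n) → E} (h : f =ᵐ[volume] g) :
    morreyNorm n p μ f = morreyNorm n p μ g := by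
  simp only [morreyNorm, eLpNorm_congr_ae (ae_restrict_of_ae h)]

theorem morreyNorm_convolution_le {𝕜 E' F : Type*} [NontriviallyNormedField 𝕜]
    [NormedAddCommGroup E'] [NormedAddCommGroup F] [NormedSpace 𝕜 E] [NormedSpace 𝕜 E']
    [NormedSpace 𝕜 F] [NormedSpace ℝ F] {L : E →L[𝕜] E' →L[𝕜] F} (hL : ‖L‖ ≤ 1)
    (hp : 1 ≤ p) {f : EuclideanSpace ℝ (Fin n) → E} {g : EuclideanSpace ℝ (Fin n) → E'}
    (hf : StronglyMeasurable f) (hg : StronglyMeasurable g) :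
    morreyNorm n p μ (f ⋆[L, volume] g) ≤ eLpNorm f 1 volume * morreyNorm n p μ g := by
  refine morreyNorm_le_iff.2 fun x₀ R hR ↦ ?_
  rw [mul_left_comm]
  refine eLpNorm_convolution_le hL hp hf hg fun t ↦ ?_
  rw [eLpNorm_comp_sub_right_restrict_ball]
  exact morreyNorm_le_iff.1 le_rfl (x₀ - t) R hR

end Morrey

theorem morrey_young_general (n : ℕ) (p : ℝ≥0∞) (μ : ℝ)
    (hp : 1 ≤ p)
    (φ g : EuclideanSpace ℝ (Fin n) → ℂ)
    (hφ : Integrable φ volume) (hg : AEStronglyMeasurable g volume) :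
    morreyNorm n p μ (φ ⋆[ContinuousLinearMap.mul ℝ ℂ, volume] g) ≤
      eLpNorm φ 1 volume * morreyNorm n p μ g := by
  rw [convolution_congr _ hφ.1.ae_eq_mk hg.ae_eq_mk, morreyNorm_congr_ae hg.ae_eq_mk,
    eLpNorm_congr_ae hφ.1.ae_eq_mk]
  exact morreyNorm_convolution_le (ContinuousLinearMap.opNorm_mul_le ℝ ℂ) hp
    hφ.1.stronglyMeasurable_mk hg.stronglyMeasurable_mk

/-- Young-type inequality in Morrey spaces. -/
theorem morrey_young (n : ℕ) (p : ℝ≥0∞) (μ : ℝ)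
    (hp : 1 ≤ p) (hμ0 : 0 ≤ μ) (hμn : μ < n)
    (φ g : EuclideanSpace ℝ (Fin n) → ℂ)
    (hφ : Integrable φ volume) (hg : AEStronglyMeasurable g volume) :
    morreyNorm n p μ (φ ⋆[ContinuousLinearMap.mul ℝ ℂ, volume] g) ≤
      eLpNorm φ 1 volume * morreyNorm n p μ g :=
  morrey_young_general n p μ hp φ g hφ hg
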